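/- arXiv:1101.4169 — 3 statements merged into one kernel-verified Lean document; each statement's English description precedes it below -/
import Mathlib

section
/- Let K be a nonnegative measurable function on (0,∞)² with K(x,y) ≤ k₁²(1+x)^μ(1+y)^μ for some k₁ > 0 and 0 ≤ μ < 1. Let R > 0, δ > 0, L > 0, and let g be a nonnegative measurable function on (0,∞) with ∫₀^R (1+y)^μ g(y) dy ≤ L. Define p(δ) = sup { ∫₀^R 1_{E'}(x) g(x) dx : E' ⊂ (0,R) measurable, |E'| ≤ δ }. Then for every measurable set E ⊂ (0,R) with |E| ≤ δ, ∫₀^R 1_E(x) ∫₀^x K(x−y,y) g(x−y) g(y) dy dx ≤ k₁² (1+R)^μ L p(δ). -/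
open MeasureTheory Set Filter
open scoped ENNReal

/-! On the triangle `0 < y < x < R` the kernel is at most `k₁² (1+R)^μ (1+y)^μ`. After exchanging
the order of integration, for fixed `y ∈ (0,R)` the remaining integral of `g (x - y)` over
`x ∈ E ∩ (y, R)` is, by translation, the integral of `g` over a subset of `(0,R)` of measure at
most `|E| ≤ δ`, hence at most `p(δ)`; the weight `(1+y)^μ g(y)` then integrates to at most `L`. -/

theorem ofReal_integral_le_lintegral_ofReal {α : Type*} [MeasurableSpace α] {μ : Measure α}
    (f : α → ℝ) : ENNReal.ofReal (∫ a, f a ∂μ) ≤ ∫⁻ a, ENNReal.ofReal (f a) ∂μ := by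
  by_cases hf : Integrable f μ
  · rw [integral_eq_lintegral_pos_part_sub_lintegral_neg_part hf]
    calc ENNReal.ofReal (_ - _) ≤ ENNReal.ofReal (∫⁻ a, ENNReal.ofReal (f a) ∂μ).toReal :=
          ENNReal.ofReal_le_ofReal (sub_le_self _ ENNReal.toReal_nonneg)
      _ ≤ _ := ENNReal.ofReal_toReal_le
  · simp [integral_undef hf]

theorem indicator_one_mul {α M : Type*} [MulZeroOneClass M] (s : Set α) (f : α → M) (x : α) :
    s.indicator (fun _ => 1) x * f x = s.indicator f x := by
  by_cases hx : x ∈ s <;> simp [hx]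

section Translation

variable {h : ℝ → ℝ≥0∞} {E : Set ℝ} {R : ℝ} {d P : ℝ≥0∞}

theorem setLIntegral_inter_Ioi_comp_sub_le (hh : Measurable h) (hE : MeasurableSet E)
    (hER : E ⊆ Ioo 0 R) (hEd : volume E ≤ d)
    (hP : ∀ S ⊆ Ioo 0 R, MeasurableSet S → volume S ≤ d → ∫⁻ z in S, h z ≤ P)
    {y : ℝ} (hy : 0 ≤ y) :
    ∫⁻ x in E ∩ Ioi y, h (x - y) ≤ P := by
  have hEy : MeasurableSet (E ∩ Ioi y) := hE.inter measurableSet_Ioi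
  calc ∫⁻ x in E ∩ Ioi y, h (x - y) = ∫⁻ z in (· + y) ⁻¹' (E ∩ Ioi y), h z := by
        rw [← (measurePreserving_add_right volume y).setLIntegral_comp_preimage hEy
          (f := fun x => h (x - y)) (by fun_prop)]
        simp only [add_sub_cancel_right]
    _ ≤ P := by
      refine hP _ (fun z ⟨hzE, hzy⟩ => ?_) (measurable_add_const y hEy) ?_
      · exact ⟨by linarith [mem_Ioi.1 hzy], by linarith [(hER hzE).2]⟩
      · rw [measure_preimage_add_right]
        exact (measure_mono inter_subset_left).trans hEd

theorem setLIntegral_convolution_le {f : ℝ → ℝ≥0∞} (hf : Measurable f) (hh : Measurable h)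
    (hE : MeasurableSet E) (hER : E ⊆ Ioo 0 R) (hEd : volume E ≤ d)
    (hP : ∀ S ⊆ Ioo 0 R, MeasurableSet S → volume S ≤ d → ∫⁻ z in S, h z ≤ P) :
    ∫⁻ x in E, ∫⁻ y in Ioo 0 x, f y * h (x - y) ≤ (∫⁻ y in Ioo 0 R, f y) * P := by
  have hmeas : Measurable (Function.uncurry fun x y =>
      (Ioo 0 x).indicator (fun y => f y * h (x - y)) y) := by
    have hset : MeasurableSet {q : ℝ × ℝ | q.2 ∈ Ioo 0 q.1} :=
      (measurableSet_lt measurable_const measurable_snd).inter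
        (measurableSet_lt measurable_snd measurable_fst)
    exact ((hf.comp measurable_snd).mul
      (hh.comp (measurable_fst.sub measurable_snd))).indicator hset
  calc ∫⁻ x in E, ∫⁻ y in Ioo 0 x, f y * h (x - y)
      = ∫⁻ x in E, ∫⁻ y, (Ioo 0 x).indicator (fun y => f y * h (x - y)) y := by
        simp only [lintegral_indicator measurableSet_Ioo]
    _ = ∫⁻ y, ∫⁻ x in E, (Ioo 0 x).indicator (fun y => f y * h (x - y)) y :=
        lintegral_lintegral_swap hmeas.aemeasurable
    _ ≤ ∫⁻ y, (Ioo 0 R).indicator (fun y => f y * P) y := lintegral_mono fun y => ?_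
    _ = (∫⁻ y in Ioo 0 R, f y) * P := by
        rw [lintegral_indicator measurableSet_Ioo, lintegral_mul_const P hf]
  by_cases hy : y ∈ Ioo 0 R
  · have hshift : ∀ x, (Ioo 0 x).indicator (fun y => f y * h (x - y)) y
        = (Ioi y).indicator (fun x => f y * h (x - y)) x := by
      intro x
      by_cases hyx : y < x <;> simp [indicator, hyx, hy.1]
    simp only [hshift, setLIntegral_indicator measurableSet_Ioi, indicator_of_mem hy]
    rw [inter_comm, lintegral_const_mul _ (f := fun x => h (x - y)) (by fun_prop)]
    gcongr
    exact setLIntegral_inter_Ioi_comp_sub_le hh hE hER hEd hP hy.1.le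
  · refine (setLIntegral_mono' hE fun x hx => (indicator_of_notMem ?_ _).le).trans (by simp)
    exact fun hyx => hy ⟨hyx.1, hyx.2.trans (hER hx).2⟩

end Translation

theorem setLIntegral_ofReal_indicator_one_mul {α : Type*} [MeasurableSpace α] {μ : Measure α}
    {E T : Set α} (hE : MeasurableSet E) (hET : E ⊆ T) (F : α → ℝ) :
    ∫⁻ x in T, ENNReal.ofReal (E.indicator (fun _ => 1) x * F x) ∂μ
      = ∫⁻ x in E, ENNReal.ofReal (F x) ∂μ := by
  rw [← inter_eq_left.2 hET, ← setLIntegral_indicator hE, inter_eq_left.2 hET]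
  congr 1 with x
  by_cases hx : x ∈ E <;> simp [hx]

def smallSetMasses (g : ℝ → ℝ) (R δ : ℝ) : Set ℝ :=
  {r : ℝ | ∃ E' ⊆ Ioo (0:ℝ) R, MeasurableSet E' ∧ volume E' ≤ ENNReal.ofReal δ ∧
    r = ∫ x in Ioo (0:ℝ) R, E'.indicator (fun _ => (1:ℝ)) x * g x}

section WeightedMass

variable {g : ℝ → ℝ} {μ R δ : ℝ}

theorem integrableOn_of_integrableOn_one_add_rpow_mul (hμ : 0 ≤ μ) (hg : Measurable g)
    (hg0 : ∀ x, 0 ≤ g x) (hgint : IntegrableOn (fun y => (1 + y) ^ μ * g y) (Ioo 0 R)) :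
    IntegrableOn g (Ioo 0 R) := by
  refine hgint.mono' hg.aestronglyMeasurable ?_
  filter_upwards [ae_restrict_mem measurableSet_Ioo] with x hx
  rw [Real.norm_of_nonneg (hg0 x)]
  exact le_mul_of_one_le_left (hg0 x) (Real.one_le_rpow (by linarith [hx.1]) hμ)

theorem setIntegral_le_setIntegral_one_add_rpow_mul (hμ : 0 ≤ μ) (hg : Measurable g)
    (hg0 : ∀ x, 0 ≤ g x) (hgint : IntegrableOn (fun y => (1 + y) ^ μ * g y) (Ioo 0 R))
    {S : Set ℝ} (hSR : S ⊆ Ioo 0 R) :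
    ∫ x in S, g x ≤ ∫ y in Ioo 0 R, (1 + y) ^ μ * g y := by
  have hgI := integrableOn_of_integrableOn_one_add_rpow_mul hμ hg hg0 hgint
  refine (setIntegral_mono_set hgI (ae_of_all _ hg0) hSR.eventuallyLE).trans ?_
  refine setIntegral_mono_on hgI hgint measurableSet_Ioo fun x hx => ?_
  exact le_mul_of_one_le_left (hg0 x) (Real.one_le_rpow (by linarith [hx.1]) hμ)

theorem integral_indicator_one_mul_eq {S : Set ℝ} (hS : MeasurableSet S) (hSR : S ⊆ Ioo 0 R) :
    ∫ x in Ioo 0 R, S.indicator (fun _ => (1:ℝ)) x * g x = ∫ x in S, g x := by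
  simp only [indicator_one_mul]
  rw [integral_indicator hS, Measure.restrict_restrict hS, inter_eq_left.2 hSR]

theorem sSup_smallSetMasses_nonneg (hg0 : ∀ x, 0 ≤ g x) : 0 ≤ sSup (smallSetMasses g R δ) := by
  refine Real.sSup_nonneg ?_
  rintro _ ⟨S, -, -, -, rfl⟩
  exact integral_nonneg fun x => mul_nonneg (indicator_nonneg (fun _ _ => zero_le_one) x) (hg0 x)

theorem lintegral_le_ofReal_sSup_smallSetMasses (hμ : 0 ≤ μ) (hg : Measurable g)
    (hg0 : ∀ x, 0 ≤ g x) (hgint : IntegrableOn (fun y => (1 + y) ^ μ * g y) (Ioo 0 R))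
    {S : Set ℝ} (hSR : S ⊆ Ioo 0 R) (hS : MeasurableSet S) (hSδ : volume S ≤ ENNReal.ofReal δ) :
    ∫⁻ z in S, ENNReal.ofReal (g z) ≤ ENNReal.ofReal (sSup (smallSetMasses g R δ)) := by
  have hbdd : BddAbove (smallSetMasses g R δ) := by
    refine ⟨∫ y in Ioo 0 R, (1 + y) ^ μ * g y, ?_⟩
    rintro _ ⟨S', hS'R, hS', -, rfl⟩
    rw [integral_indicator_one_mul_eq hS' hS'R]
    exact setIntegral_le_setIntegral_one_add_rpow_mul hμ hg hg0 hgint hS'R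
  rw [← ofReal_integral_eq_lintegral_ofReal
    ((integrableOn_of_integrableOn_one_add_rpow_mul hμ hg hg0 hgint).mono_set hSR)
    (ae_of_all _ hg0)]
  exact ENNReal.ofReal_le_ofReal
    (le_csSup hbdd ⟨S, hSR, hS, hSδ, (integral_indicator_one_mul_eq hS hSR).symm⟩)

end WeightedMass

theorem ofReal_coagulation_term_le {K : ℝ → ℝ → ℝ} {g : ℝ → ℝ} {k₁ μ R x y : ℝ} (hμ : 0 ≤ μ)
    (hK : ∀ x > (0:ℝ), ∀ y > (0:ℝ), K x y ≤ k₁ ^ 2 * (1 + x) ^ μ * (1 + y) ^ μ)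
    (hg0 : ∀ x, 0 ≤ g x) (hxR : x < R) (hy : y ∈ Ioo 0 x) :
    ENNReal.ofReal (K (x - y) y * g (x - y) * g y)
      ≤ ENNReal.ofReal (k₁ ^ 2 * (1 + R) ^ μ)
        * (ENNReal.ofReal ((1 + y) ^ μ * g y) * ENNReal.ofReal (g (x - y))) := by
  have hy0 := hg0 y
  have hxy := hg0 (x - y)
  have hwy : 0 ≤ (1 + y) ^ μ := Real.rpow_nonneg (by linarith [hy.1]) μ
  have hC : 0 ≤ k₁ ^ 2 * (1 + R) ^ μ :=
    mul_nonneg (sq_nonneg k₁) (Real.rpow_nonneg (by linarith [hy.1, hy.2]) μ)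
  rw [← ENNReal.ofReal_mul (mul_nonneg hwy hy0), ← ENNReal.ofReal_mul hC]
  refine ENNReal.ofReal_le_ofReal ?_
  calc K (x - y) y * g (x - y) * g y
      ≤ k₁ ^ 2 * (1 + (x - y)) ^ μ * (1 + y) ^ μ * g (x - y) * g y := by
        gcongr; exact hK _ (by linarith [hy.2]) _ hy.1
    _ ≤ k₁ ^ 2 * (1 + R) ^ μ * (1 + y) ^ μ * g (x - y) * g y := by
        gcongr
        · linarith [hy.2]
        · linarith [hy.1]
    _ = k₁ ^ 2 * (1 + R) ^ μ * ((1 + y) ^ μ * g y * g (x - y)) := by ring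

theorem setLIntegral_ofReal_coagulation_gain_le {K : ℝ → ℝ → ℝ} {g : ℝ → ℝ} {k₁ μ R : ℝ}
    {E : Set ℝ} (hμ : 0 ≤ μ)
    (hK : ∀ x > (0:ℝ), ∀ y > (0:ℝ), K x y ≤ k₁ ^ 2 * (1 + x) ^ μ * (1 + y) ^ μ)
    (hg0 : ∀ x, 0 ≤ g x) (hE : MeasurableSet E) (hER : E ⊆ Ioo 0 R) :
    ∫⁻ x in E, ENNReal.ofReal (∫ y in Ioo 0 x, K (x - y) y * g (x - y) * g y)
      ≤ ENNReal.ofReal (k₁ ^ 2 * (1 + R) ^ μ) * ∫⁻ x in E, ∫⁻ y in Ioo 0 x,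
          ENNReal.ofReal ((1 + y) ^ μ * g y) * ENNReal.ofReal (g (x - y)) := by
  calc ∫⁻ x in E, ENNReal.ofReal (∫ y in Ioo 0 x, K (x - y) y * g (x - y) * g y)
      ≤ ∫⁻ x in E, ∫⁻ y in Ioo 0 x, ENNReal.ofReal (k₁ ^ 2 * (1 + R) ^ μ)
          * (ENNReal.ofReal ((1 + y) ^ μ * g y) * ENNReal.ofReal (g (x - y))) :=
        setLIntegral_mono' hE fun x hx => (ofReal_integral_le_lintegral_ofReal _).trans
          (setLIntegral_mono' measurableSet_Ioo fun y hy =>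
            ofReal_coagulation_term_le hμ hK hg0 (hER hx).2 hy)
    _ = _ := by simp only [lintegral_const_mul' _ _ ENNReal.ofReal_ne_top]

theorem coagulation_gain_uniform_integrability_estimate_general
    (K : ℝ → ℝ → ℝ) (k₁ μ R δ L : ℝ) (g : ℝ → ℝ) (p : ℝ)
    (hμ0 : 0 ≤ μ)
    (hK : ∀ x > (0:ℝ), ∀ y > (0:ℝ), K x y ≤ k₁ ^ 2 * (1 + x) ^ μ * (1 + y) ^ μ)
    (hR : 0 < R) (hL : 0 < L)
    (hgmeas : Measurable g) (hgnn : ∀ x, 0 ≤ g x)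
    (hgint : IntegrableOn (fun y => (1 + y) ^ μ * g y) (Ioo (0:ℝ) R))
    (hgL : (∫ y in Ioo (0:ℝ) R, (1 + y) ^ μ * g y) ≤ L)
    (hp : p = sSup {r : ℝ | ∃ E' ⊆ Ioo (0:ℝ) R, MeasurableSet E' ∧
      volume E' ≤ ENNReal.ofReal δ ∧
      r = ∫ x in Ioo (0:ℝ) R, E'.indicator (fun _ => (1:ℝ)) x * g x}) :
    ∀ E ⊆ Ioo (0:ℝ) R, MeasurableSet E → volume E ≤ ENNReal.ofReal δ →
      (∫ x in Ioo (0:ℝ) R, E.indicator (fun _ => (1:ℝ)) x *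
          ∫ y in Ioo (0:ℝ) x, K (x - y) y * g (x - y) * g y)
        ≤ k₁ ^ 2 * (1 + R) ^ μ * L * p := by
  intro E hER hE hEδ
  set C := k₁ ^ 2 * (1 + R) ^ μ
  have hC : 0 ≤ C := mul_nonneg (sq_nonneg k₁) (Real.rpow_nonneg (by linarith) μ)
  have hp0 : 0 ≤ p := hp ▸ sSup_smallSetMasses_nonneg hgnn
  have hwL : ∫⁻ y in Ioo 0 R, ENNReal.ofReal ((1 + y) ^ μ * g y) ≤ ENNReal.ofReal L := by
    rw [← ofReal_integral_eq_lintegral_ofReal hgint (ae_restrict_of_forall_mem measurableSet_Ioo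
      fun y hy => mul_nonneg (Real.rpow_nonneg (by linarith [hy.1]) μ) (hgnn y))]
    exact ENNReal.ofReal_le_ofReal hgL
  have hpE : ∀ S ⊆ Ioo 0 R, MeasurableSet S → volume S ≤ ENNReal.ofReal δ →
      ∫⁻ z in S, ENNReal.ofReal (g z) ≤ ENNReal.ofReal p := fun S hSR hS hSδ => by
    rw [hp]; exact lintegral_le_ofReal_sSup_smallSetMasses hμ0 hgmeas hgnn hgint hSR hS hSδ
  rw [← ENNReal.ofReal_le_ofReal_iff (mul_nonneg (mul_nonneg hC hL.le) hp0)]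
  calc ENNReal.ofReal (∫ x in Ioo 0 R, E.indicator (fun _ => 1) x *
        ∫ y in Ioo 0 x, K (x - y) y * g (x - y) * g y)
      ≤ ∫⁻ x in E, ENNReal.ofReal (∫ y in Ioo 0 x, K (x - y) y * g (x - y) * g y) :=
        (ofReal_integral_le_lintegral_ofReal _).trans_eq
          (setLIntegral_ofReal_indicator_one_mul hE hER _)
    _ ≤ ENNReal.ofReal C * ∫⁻ x in E, ∫⁻ y in Ioo 0 x,
          ENNReal.ofReal ((1 + y) ^ μ * g y) * ENNReal.ofReal (g (x - y)) :=
        setLIntegral_ofReal_coagulation_gain_le hμ0 hK hgnn hE hER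
    _ ≤ ENNReal.ofReal C
          * ((∫⁻ y in Ioo 0 R, ENNReal.ofReal ((1 + y) ^ μ * g y)) * ENNReal.ofReal p) := by
        gcongr
        exact setLIntegral_convolution_le (by fun_prop) (by fun_prop) hE hER hEδ hpE
    _ ≤ ENNReal.ofReal C * (ENNReal.ofReal L * ENNReal.ofReal p) := by gcongr
    _ = ENNReal.ofReal (C * L * p) := by
        rw [ENNReal.ofReal_mul (mul_nonneg hC hL.le), ENNReal.ofReal_mul hC, mul_assoc]

/-- Estimate of the coagulation gain term `I₁ⁿ` in the proof of Lemma 2.2 (iii):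
for every measurable `E ⊆ (0,R)` with `|E| ≤ δ`,
`∫₀^R 1_E(x) ∫₀^x K(x-y,y) g(x-y) g(y) dy dx ≤ k₁² (1+R)^μ L p(δ)`,
where `p(δ)` is the supremum of `∫₀^R 1_{E'} g` over measurable `E' ⊆ (0,R)`
with `|E'| ≤ δ`. -/
theorem coagulation_gain_uniform_integrability_estimate
    (K : ℝ → ℝ → ℝ) (k₁ μ R δ L : ℝ) (g : ℝ → ℝ) (p : ℝ)
    (hKmeas : Measurable (Function.uncurry K))
    (hKnn : ∀ x y, 0 ≤ K x y)
    (hk₁ : 0 < k₁) (hμ0 : 0 ≤ μ) (hμ1 : μ < 1)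
    (hK : ∀ x > (0:ℝ), ∀ y > (0:ℝ), K x y ≤ k₁ ^ 2 * (1 + x) ^ μ * (1 + y) ^ μ)
    (hR : 0 < R) (hδ : 0 < δ) (hL : 0 < L)
    (hgmeas : Measurable g) (hgnn : ∀ x, 0 ≤ g x)
    (hgint : IntegrableOn (fun y => (1 + y) ^ μ * g y) (Ioo (0:ℝ) R))
    (hgL : (∫ y in Ioo (0:ℝ) R, (1 + y) ^ μ * g y) ≤ L)
    (hp : p = sSup {r : ℝ | ∃ E' ⊆ Ioo (0:ℝ) R, MeasurableSet E' ∧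
      volume E' ≤ ENNReal.ofReal δ ∧
      r = ∫ x in Ioo (0:ℝ) R, E'.indicator (fun _ => (1:ℝ)) x * g x}) :
    ∀ E ⊆ Ioo (0:ℝ) R, MeasurableSet E → volume E ≤ ENNReal.ofReal δ →
      (∫ x in Ioo (0:ℝ) R, E.indicator (fun _ => (1:ℝ)) x *
          ∫ y in Ioo (0:ℝ) x, K (x - y) y * g (x - y) * g y)
        ≤ k₁ ^ 2 * (1 + R) ^ μ * L * p :=
  coagulation_gain_uniform_integrability_estimate_general K k₁ μ R δ L g p hμ0 hK hR hL hgmeas hgnn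
    hgint hgL hp
end

section
/- Assume K satisfies (H1)-(H2) and for n ≥ 1 set Kₙ(x,y) = K(x,y) if x+y < n and 0 otherwise. Let (gⁿ) be a sequence in X⁺ with ‖gⁿ‖ ≤ L for all n, and let g ∈ X⁺ be such that gⁿ ⇀ g weakly in L¹(0,∞) as n → ∞. Then for every R > 0, the truncated coagulation loss terms converge weakly: Q₂ⁿ(gⁿ) ⇀ Q₂(g) in L¹(0,R) as n → ∞, where Q₂ⁿ(g)(x) = ∫₀^{n−x} Kₙ(x,y)g(x)g(y)dy and Q₂(g)(x) = ∫₀^∞ K(x,y)g(x)g(y)dy. -/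
open MeasureTheory Set Filter

/-- The truncated coagulation kernel `Kₙ`. -/
noncomputable def Ktr (K : ℝ → ℝ → ℝ) (n : ℕ) (x y : ℝ) : ℝ :=
  if x + y < n then K x y else 0

/-!
For `x < R` the growth bound (H2) with `μ < 1` gives `K x y ≤ k₁² (1 + R) (1 + A)^(μ - 1) (1 + y)`
whenever `y ≥ A`, so the part of the inner integral over `y ≥ A` is at most a multiple of
`(1 + A)^(μ - 1)` in the weighted norm, uniformly in `n`; for `n ≥ R + A` the truncation no longer
affects `y < A`. It therefore suffices to pass to the limit with the inner integral cut to
`(0, A)`. There the inner integrals converge pointwise in `x` by weak convergence and are bounded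
uniformly in `x` and `n`, and a nonnegative weakly convergent sequence times a bounded pointwise
convergent one converges weakly: off an Egorov set the second factor converges uniformly, and on the
Egorov set the mass of `gⁿ` tends to that of `g`, which is small by absolute continuity.
-/

open Topology

theorem tendsto_const_mul_one_add_rpow_atTop {μ : ℝ} (a : ℝ) (hμ : μ < 1) :
    Tendsto (fun A : ℝ => a * (1 + A) ^ (μ - 1)) atTop (𝓝 0) := by
  have h := (tendsto_rpow_neg_atTop (sub_pos.2 hμ)).comp
    (tendsto_atTop_add_const_left atTop 1 tendsto_id)
  simpa [Function.comp_def, neg_sub] using h.const_mul a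

theorem tendsto_of_forall_eventually_dist_le {ι κ E : Type*} [PseudoMetricSpace E]
    {p : Filter ι} [p.NeBot] {q : Filter κ} {a : κ → E} {b : ι → κ → E} {c : ι → E} {ℓ : E}
    {e e' : ι → ℝ} (hb : ∀ᶠ i in p, Tendsto (b i) q (𝓝 (c i)))
    (hab : ∀ᶠ i in p, ∀ᶠ n in q, dist (a n) (b i n) ≤ e i) (hc : ∀ᶠ i in p, dist (c i) ℓ ≤ e' i)
    (he : Tendsto e p (𝓝 0)) (he' : Tendsto e' p (𝓝 0)) : Tendsto a q (𝓝 ℓ) := by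
  refine Metric.tendsto_nhds.2 fun ε hε => ?_
  have hε3 : 0 < ε / 3 := by positivity
  obtain ⟨i, hbi, hai, hci, hei, hei'⟩ := (hb.and (hab.and (hc.and
    ((he.eventually (gt_mem_nhds hε3)).and (he'.eventually (gt_mem_nhds hε3)))))).exists
  filter_upwards [hai, Metric.tendsto_nhds.1 hbi _ hε3] with n han hbn
  calc dist (a n) ℓ ≤ dist (a n) (b i n) + dist (b i n) (c i) + dist (c i) ℓ :=
        dist_triangle4 _ _ _ _
    _ < ε := by linarith

section WeakL1

variable {α : Type*} [MeasurableSpace α] {μ : Measure α}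

def TendstoWeakL1 (μ : Measure α) (f : ℕ → α → ℝ) (g : α → ℝ) : Prop :=
  ∀ ψ : α → ℝ, Measurable ψ → (∃ B, ∀ x, |ψ x| ≤ B) →
    Tendsto (fun n => ∫ x, f n x * ψ x ∂μ) atTop (𝓝 (∫ x, g x * ψ x ∂μ))

theorem Measurable.integral_kernel_mul {β : Type*} [MeasurableSpace β] {ν : Measure β} [SFinite ν]
    {k : α → β → ℝ} (hk : Measurable (Function.uncurry k)) {f : β → ℝ} (hf : Measurable f) :
    Measurable fun x => ∫ y, k x y * f y ∂ν :=
  (hk.mul (hf.comp measurable_snd)).stronglyMeasurable.integral_prod_right'.measurable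

theorem integral_mul_mul_mul_const (k f : α → ℝ) (a b : ℝ) :
    (∫ y, k y * a * f y ∂μ) * b = a * ∫ y, b * k y * f y ∂μ := by
  rw [← integral_mul_const, ← integral_const_mul]
  congr 1 with y
  ring

variable {S : Set α}

theorem abs_setIntegral_mul_le {f v : α → ℝ} {c : ℝ} (hS : MeasurableSet S)
    (hf : IntegrableOn f S μ) (hv : ∀ x ∈ S, |v x| ≤ c) :
    |∫ x in S, f x * v x ∂μ| ≤ c * ∫ x in S, |f x| ∂μ := by
  calc |∫ x in S, f x * v x ∂μ| ≤ ∫ x in S, c * |f x| ∂μ :=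
        norm_integral_le_of_norm_le (hf.abs.const_mul c)
          (ae_restrict_of_forall_mem hS fun x hx => by
            rw [Real.norm_eq_abs, abs_mul, mul_comm]
            exact mul_le_mul_of_nonneg_right (hv x hx) (abs_nonneg _))
    _ = c * ∫ x in S, |f x| ∂μ := integral_const_mul c _

theorem MeasureTheory.IntegrableOn.mul_of_abs_le {f v : α → ℝ} {c : ℝ} (hf : IntegrableOn f S μ)
    (hS : MeasurableSet S) (hv : AEStronglyMeasurable v (μ.restrict S))
    (hvc : ∀ x ∈ S, |v x| ≤ c) : IntegrableOn (fun x => f x * v x) S μ :=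
  Integrable.mul_bdd hf hv (ae_restrict_of_forall_mem hS hvc)

theorem abs_setIntegral_mul_le_of_abs_le {f u : α → ℝ} {E : Set α} {M η : ℝ}
    (hS : MeasurableSet S) (hE : MeasurableSet E) (hf0 : ∀ᵐ x ∂μ, 0 ≤ f x)
    (hf : IntegrableOn f S μ) (hη : 0 ≤ η) (huM : ∀ x ∈ S, |u x| ≤ M)
    (huη : ∀ x ∈ S \ E, |u x| ≤ η) :
    |∫ x in S, f x * u x ∂μ| ≤ M * ∫ x in S ∩ E, f x ∂μ + η * ∫ x in S, f x ∂μ := by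
  have hbound : ∀ᵐ x ∂μ.restrict S, ‖f x * u x‖ ≤ M * E.indicator f x + η * f x := by
    filter_upwards [ae_restrict_mem hS, ae_restrict_of_ae hf0] with x hxS hfx
    rw [Real.norm_eq_abs, abs_mul, abs_of_nonneg hfx]
    by_cases hxE : x ∈ E
    · rw [indicator_of_mem hxE]
      nlinarith [huM x hxS]
    · rw [indicator_of_notMem hxE]
      nlinarith [huη x ⟨hxS, hxE⟩]
  calc |∫ x in S, f x * u x ∂μ| ≤ ∫ x in S, (M * E.indicator f x + η * f x) ∂μ :=
        norm_integral_le_of_norm_le (((hf.indicator hE).const_mul M).add (hf.const_mul η)) hbound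
    _ = M * ∫ x in S ∩ E, f x ∂μ + η * ∫ x in S, f x ∂μ := by
        rw [integral_add ((hf.indicator hE).const_mul M) (hf.const_mul η), integral_const_mul,
          integral_const_mul, setIntegral_indicator hE]

namespace TendstoWeakL1

variable {f : ℕ → α → ℝ} {g : α → ℝ}

theorem tendsto_setIntegral_mul (h : TendstoWeakL1 μ f g) (hS : MeasurableSet S) {v : α → ℝ}
    (hv : Measurable v) {M : ℝ} (hvM : ∀ x ∈ S, |v x| ≤ M) :
    Tendsto (fun n => ∫ x in S, f n x * v x ∂μ) atTop (𝓝 (∫ x in S, g x * v x ∂μ)) := by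
  have hψ : ∀ x, |S.indicator v x| ≤ |M| := fun x => by
    by_cases hx : x ∈ S
    · simpa [hx] using (hvM x hx).trans (le_abs_self M)
    · simp [hx]
  have hind : ∀ F : α → ℝ, ∫ x, F x * S.indicator v x ∂μ = ∫ x in S, F x * v x ∂μ := fun F => by
    simp_rw [← indicator_mul_right]
    exact integral_indicator hS
  simpa only [hind] using h _ (hv.indicator hS) ⟨|M|, hψ⟩

theorem tendsto_setIntegral (h : TendstoWeakL1 μ f g) (hS : MeasurableSet S) :
    Tendsto (fun n => ∫ x in S, f n x ∂μ) atTop (𝓝 (∫ x in S, g x ∂μ)) := by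
  simpa using h.tendsto_setIntegral_mul hS measurable_const (v := fun _ => 1) (M := 1)
    fun _ _ => by simp

theorem tendsto_setIntegral_mul_of_tendsto_zero (h : TendstoWeakL1 μ f g)
    (hf0 : ∀ n, ∀ᵐ x ∂μ, 0 ≤ f n x) (hfi : ∀ n, Integrable (f n) μ) (hg : Integrable g μ)
    (hS : MeasurableSet S) (hμS : μ S ≠ ⊤) {u : ℕ → α → ℝ} (hu : ∀ n, Measurable (u n))
    {M : ℝ} (huM : ∀ n, ∀ x ∈ S, |u n x| ≤ M)
    (hu0 : ∀ x ∈ S, Tendsto (fun n => u n x) atTop (𝓝 0)) :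
    Tendsto (fun n => ∫ x in S, f n x * u n x ∂μ) atTop (𝓝 0) := by
  have : IsFiniteMeasure (μ.restrict S) := isFiniteMeasure_restrict.2 hμS
  choose E hEm hEμ hEu using fun k : ℕ => tendstoUniformlyOn_of_ae_tendsto' (μ := μ.restrict S)
    (fun n => (hu n).stronglyMeasurable) stronglyMeasurable_const
    ((ae_restrict_iff' hS).2 (ae_of_all _ hu0)) (Nat.one_div_pos_of_nat (n := k))
  have hμE : Tendsto (fun k => μ.restrict S (E k)) atTop (𝓝 0) := by
    refine tendsto_of_tendsto_of_tendsto_of_le_of_le tendsto_const_nhds ?_ (fun _ => bot_le) hEμ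
    simpa using ENNReal.tendsto_ofReal (tendsto_one_div_add_atTop_nhds_zero_nat (𝕜 := ℝ))
  -- limit in `n` of the bound of `abs_setIntegral_mul_le_of_abs_le` for `E k`, `η = 1/(k+1)`
  have hr : Tendsto (fun k : ℕ => M * ∫ x in S ∩ E k, g x ∂μ + 1 / (k + 1) * ∫ x in S, g x ∂μ)
      atTop (𝓝 0) := by
    have hgE := hg.restrict.tendsto_setIntegral_nhds_zero hμE
    simp_rw [Measure.restrict_restrict (hEm _), inter_comm] at hgE
    simpa using (hgE.const_mul M).add (tendsto_one_div_add_atTop_nhds_zero_nat.mul_const _)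
  refine Metric.tendsto_nhds.2 fun ε hε => ?_
  obtain ⟨k, hk⟩ := (hr.eventually (gt_mem_nhds hε)).exists
  have hlim := ((h.tendsto_setIntegral (hS.inter (hEm k))).const_mul M).add
    ((h.tendsto_setIntegral hS).const_mul (1 / (k + 1 : ℝ)))
  filter_upwards [hlim.eventually (gt_mem_nhds hk),
    Metric.tendstoUniformlyOn_iff.1 (hEu k) _ Nat.one_div_pos_of_nat] with n hn hun
  rw [Real.dist_0_eq_abs]
  refine (abs_setIntegral_mul_le_of_abs_le hS (hEm k) (hf0 n) (hfi n).integrableOn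
    Nat.one_div_pos_of_nat.le (huM n) fun x hx => ?_).trans_lt hn
  simpa [Real.dist_eq, abs_sub_comm] using (hun x hx.2).le

theorem tendsto_setIntegral_mul_of_tendsto (h : TendstoWeakL1 μ f g)
    (hf0 : ∀ n, ∀ᵐ x ∂μ, 0 ≤ f n x) (hfi : ∀ n, Integrable (f n) μ) (hg : Integrable g μ)
    (hS : MeasurableSet S) (hμS : μ S ≠ ⊤) {v : ℕ → α → ℝ} {w : α → ℝ}
    (hv : ∀ n, Measurable (v n)) (hw : Measurable w) {M : ℝ} (hvM : ∀ n, ∀ x ∈ S, |v n x| ≤ M)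
    (hvw : ∀ x ∈ S, Tendsto (fun n => v n x) atTop (𝓝 (w x))) :
    Tendsto (fun n => ∫ x in S, f n x * v n x ∂μ) atTop (𝓝 (∫ x in S, g x * w x ∂μ)) := by
  have hwM : ∀ x ∈ S, |w x| ≤ M := fun x hx => le_of_tendsto' (hvw x hx).abs fun n => hvM n x hx
  have hvwM : ∀ n, ∀ x ∈ S, |v n x - w x| ≤ M + M := fun n x hx =>
    (abs_sub _ _).trans (add_le_add (hvM n x hx) (hwM x hx))
  have hsplit : ∀ n, ∫ x in S, f n x * w x ∂μ + ∫ x in S, f n x * (v n x - w x) ∂μ =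
      ∫ x in S, f n x * v n x ∂μ := fun n => by
    have hfS : IntegrableOn (f n) S μ := (hfi n).integrableOn
    rw [← integral_add (hfS.mul_of_abs_le hS hw.aestronglyMeasurable hwM)
      (hfS.mul_of_abs_le hS (v := fun x => v n x - w x) ((hv n).sub hw).aestronglyMeasurable
        (hvwM n))]
    simp only [mul_sub, add_sub_cancel]
  have hlim := (h.tendsto_setIntegral_mul hS hw hwM).add
    (h.tendsto_setIntegral_mul_of_tendsto_zero hf0 hfi hg hS hμS (fun n => (hv n).sub hw) hvwM
      fun x hx => by simpa using (hvw x hx).sub_const (w x))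
  rw [add_zero] at hlim
  exact hlim.congr hsplit

theorem tendsto_setIntegral_mul_setIntegral [SFinite μ] (h : TendstoWeakL1 μ f g)
    (hf0 : ∀ n, ∀ᵐ x ∂μ, 0 ≤ f n x) (hfi : ∀ n, Integrable (f n) μ) (hg : Integrable g μ)
    (hfm : ∀ n, Measurable (f n)) (hgm : Measurable g) {L : ℝ} (hL : ∀ n, ∫ x, |f n x| ∂μ ≤ L)
    (hS : MeasurableSet S) (hμS : μ S ≠ ⊤) {T : Set α} (hT : MeasurableSet T)
    {k : α → α → ℝ} (hk : Measurable (Function.uncurry k)) {C : ℝ} (hC : 0 ≤ C)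
    (hkC : ∀ x ∈ S, ∀ y ∈ T, |k x y| ≤ C) :
    Tendsto (fun n => ∫ x in S, f n x * ∫ y in T, k x y * f n y ∂μ ∂μ) atTop
      (𝓝 (∫ x in S, g x * ∫ y in T, k x y * g y ∂μ ∂μ)) := by
  have hcomm : ∀ (x : α) (F : α → ℝ), ∫ y in T, k x y * F y ∂μ = ∫ y in T, F y * k x y ∂μ :=
    fun x F => by simp only [mul_comm]
  refine h.tendsto_setIntegral_mul_of_tendsto hf0 hfi hg hS hμS
    (fun n => hk.integral_kernel_mul (hfm n)) (hk.integral_kernel_mul hgm) (M := C * L)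
    (fun n x hx => ?_) fun x hx => ?_
  · rw [hcomm]
    calc |∫ y in T, f n y * k x y ∂μ| ≤ C * ∫ y in T, |f n y| ∂μ :=
          abs_setIntegral_mul_le hT (hfi n).integrableOn (hkC x hx)
      _ ≤ C * L := mul_le_mul_of_nonneg_left ((setIntegral_le_integral (hfi n).abs
          (ae_of_all _ fun _ => abs_nonneg _)).trans (hL n)) hC
  · simp only [hcomm]
    exact h.tendsto_setIntegral_mul hT (hk.comp measurable_prodMk_left) (hkC x hx)

end TendstoWeakL1

end WeakL1

section Weighted

noncomputable def weightedNorm (f : ℝ → ℝ) : ℝ := ∫ x in Ioi (0:ℝ), (1 + x) * |f x|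

variable {f : ℝ → ℝ} {s : Set ℝ}

theorem weight_mul_abs_nonneg : ∀ᵐ x ∂(volume.restrict (Ioi (0:ℝ))), 0 ≤ (1 + x) * |f x| :=
  ae_restrict_of_forall_mem measurableSet_Ioi fun x (hx : 0 < x) =>
    mul_nonneg (by linarith) (abs_nonneg _)

theorem weightedNorm_nonneg : 0 ≤ weightedNorm f :=
  integral_nonneg_of_ae weight_mul_abs_nonneg

theorem setIntegral_weight_le_weightedNorm
    (hf : IntegrableOn (fun x => (1 + x) * |f x|) (Ioi 0)) (hs : s ⊆ Ioi 0) :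
    ∫ x in s, (1 + x) * |f x| ≤ weightedNorm f :=
  setIntegral_mono_set hf weight_mul_abs_nonneg hs.eventuallyLE

theorem setIntegral_abs_le_weightedNorm (hf : IntegrableOn (fun x => (1 + x) * |f x|) (Ioi 0))
    (hs : MeasurableSet s) (hs0 : s ⊆ Ioi 0) : ∫ x in s, |f x| ≤ weightedNorm f := by
  refine (integral_mono_of_nonneg (ae_of_all _ fun _ => abs_nonneg _) (hf.mono_set hs0)
    (ae_restrict_of_forall_mem hs fun x hx => ?_)).trans (setIntegral_weight_le_weightedNorm hf hs0)
  have hx : 0 < x := hs0 hx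
  nlinarith [abs_nonneg (f x)]

theorem integrableOn_of_weighted (hf : IntegrableOn (fun x => (1 + x) * |f x|) (Ioi 0))
    (hfm : Measurable f) : IntegrableOn f (Ioi 0) :=
  Integrable.mono' hf hfm.aestronglyMeasurable <|
    ae_restrict_of_forall_mem measurableSet_Ioi fun x (hx : 0 < x) => by
      rw [Real.norm_eq_abs]
      nlinarith [abs_nonneg (f x)]

variable {W : ℝ → ℝ} {c : ℝ}

theorem norm_mul_le_weight {x : ℝ} (hW : |W x| ≤ c * (1 + x)) :
    ‖W x * f x‖ ≤ c * ((1 + x) * |f x|) := by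
  rw [Real.norm_eq_abs, abs_mul, ← mul_assoc]
  exact mul_le_mul_of_nonneg_right hW (abs_nonneg _)

theorem integrableOn_mul_of_abs_le_weight (hs : MeasurableSet s) (hs0 : s ⊆ Ioi 0)
    (hWm : Measurable W) (hfm : Measurable f) (hW : ∀ y ∈ s, |W y| ≤ c * (1 + y))
    (hf : IntegrableOn (fun x => (1 + x) * |f x|) (Ioi 0)) :
    IntegrableOn (fun y => W y * f y) s :=
  Integrable.mono' ((hf.mono_set hs0).const_mul c) (hWm.mul hfm).aestronglyMeasurable
    (ae_restrict_of_forall_mem hs fun y hy => norm_mul_le_weight (hW y hy))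

theorem abs_setIntegral_mul_le_weightedNorm (hc : 0 ≤ c) (hs : MeasurableSet s)
    (hs0 : s ⊆ Ioi 0) (hW : ∀ y ∈ s, |W y| ≤ c * (1 + y))
    (hf : IntegrableOn (fun x => (1 + x) * |f x|) (Ioi 0)) :
    |∫ y in s, W y * f y| ≤ c * weightedNorm f :=
  calc |∫ y in s, W y * f y| ≤ ∫ y in s, c * ((1 + y) * |f y|) :=
        norm_integral_le_of_norm_le ((hf.mono_set hs0).const_mul c)
          (ae_restrict_of_forall_mem hs fun y hy => norm_mul_le_weight (hW y hy))
    _ = c * ∫ y in s, (1 + y) * |f y| := integral_const_mul c _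
    _ ≤ c * weightedNorm f :=
        mul_le_mul_of_nonneg_left (setIntegral_weight_le_weightedNorm hf hs0) hc

theorem abs_setIntegral_Ioi_sub_Ioo_le {A : ℝ} (hc : 0 ≤ c)
    (hWf : IntegrableOn (fun y => W y * f y) (Ioi 0))
    (hWA : ∀ y > 0, A ≤ y → |W y| ≤ c * (1 + y))
    (hf : IntegrableOn (fun x => (1 + x) * |f x|) (Ioi 0)) :
    |(∫ y in Ioi 0, W y * f y) - ∫ y in Ioo 0 A, W y * f y| ≤ c * weightedNorm f := by
  rw [← setIntegral_sdiff measurableSet_Ioo hWf Ioo_subset_Ioi_self]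
  exact abs_setIntegral_mul_le_weightedNorm hc (measurableSet_Ioi.diff measurableSet_Ioo)
    sdiff_subset (fun y hy => hWA y hy.1 (not_lt.1 fun hyA => hy.2 ⟨hy.1, hyA⟩)) hf

theorem abs_setIntegral_mul_setIntegral_sub_le {k : ℝ → ℝ → ℝ} {S : Set ℝ} {A C L : ℝ}
    (hS : MeasurableSet S) (hS0 : S ⊆ Ioi 0) (hk : Measurable (Function.uncurry k))
    (hfm : Measurable f) (hf : IntegrableOn (fun x => (1 + x) * |f x|) (Ioi 0))
    (hfL : weightedNorm f ≤ L) (hC : 0 ≤ C) (hc : 0 ≤ c)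
    (hkC : ∀ x ∈ S, ∀ y > 0, |k x y| ≤ C * (1 + y))
    (hkc : ∀ x ∈ S, ∀ y > 0, A ≤ y → |k x y| ≤ c * (1 + y)) :
    |(∫ x in S, f x * ∫ y in Ioi 0, k x y * f y) - ∫ x in S, f x * ∫ y in Ioo 0 A, k x y * f y|
      ≤ c * L * L := by
  have hfS : IntegrableOn f S := (integrableOn_of_weighted hf hfm).mono_set hS0
  have hinner (t : Set ℝ) (ht : MeasurableSet t) (ht0 : t ⊆ Ioi 0) :
      IntegrableOn (fun x => f x * ∫ y in t, k x y * f y) S :=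
    hfS.mul_of_abs_le hS (hk.integral_kernel_mul hfm).aestronglyMeasurable fun x hx =>
      abs_setIntegral_mul_le_weightedNorm hC ht ht0 (fun y hy => hkC x hx y (ht0 hy)) hf
  rw [← integral_sub (hinner _ measurableSet_Ioi subset_rfl)
    (hinner _ measurableSet_Ioo Ioo_subset_Ioi_self)]
  simp_rw [← mul_sub]
  calc _ ≤ c * weightedNorm f * ∫ x in S, |f x| :=
        abs_setIntegral_mul_le hS hfS fun x hx => abs_setIntegral_Ioi_sub_Ioo_le hc
          (integrableOn_mul_of_abs_le_weight measurableSet_Ioi subset_rfl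
            (hk.comp measurable_prodMk_left) hfm (hkC x hx) hf) (hkc x hx) hf
    _ ≤ c * L * L := mul_le_mul (mul_le_mul_of_nonneg_left hfL hc)
        ((setIntegral_abs_le_weightedNorm hf hS hS0).trans hfL)
        (integral_nonneg fun _ => abs_nonneg _) (mul_nonneg hc (weightedNorm_nonneg.trans hfL))

theorem TendstoWeakL1.tendsto_setIntegral_Ioo_mul_setIntegral_Ioo {gn : ℕ → ℝ → ℝ} {g : ℝ → ℝ}
    {L : ℝ} (h : TendstoWeakL1 (volume.restrict (Ioi 0)) gn g)
    (hgn0 : ∀ n, ∀ᵐ x ∂(volume.restrict (Ioi (0:ℝ))), 0 ≤ gn n x)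
    (hgnm : ∀ n, Measurable (gn n)) (hgn : ∀ n, IntegrableOn (fun x => (1 + x) * |gn n x|) (Ioi 0))
    (hgnL : ∀ n, weightedNorm (gn n) ≤ L) (hgm : Measurable g)
    (hg : IntegrableOn (fun x => (1 + x) * |g x|) (Ioi 0)) {k : ℝ → ℝ → ℝ}
    (hk : Measurable (Function.uncurry k)) {R A C : ℝ} (hC : 0 ≤ C)
    (hkC : ∀ x ∈ Ioo 0 R, ∀ y ∈ Ioo 0 A, |k x y| ≤ C) :
    Tendsto (fun n => ∫ x in Ioo 0 R, gn n x * ∫ y in Ioo 0 A, k x y * gn n y) atTop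
      (𝓝 (∫ x in Ioo 0 R, g x * ∫ y in Ioo 0 A, k x y * g y)) := by
  have hlim := h.tendsto_setIntegral_mul_setIntegral hgn0
    (fun n => integrableOn_of_weighted (hgn n) (hgnm n)) (integrableOn_of_weighted hg hgm) hgnm
    hgm (fun n => (setIntegral_abs_le_weightedNorm (hgn n) measurableSet_Ioi subset_rfl).trans
      (hgnL n))
    measurableSet_Ioo ((Measure.restrict_apply_le _ _).trans_lt measure_Ioo_lt_top).ne
    measurableSet_Ioo hk hC hkC
  simpa only [Measure.restrict_restrict_of_subset Ioo_subset_Ioi_self] using hlim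

theorem TendstoWeakL1.tendsto_setIntegral_Ioo_mul_setIntegral_Ioi {gn : ℕ → ℝ → ℝ} {g : ℝ → ℝ}
    {L : ℝ} (h : TendstoWeakL1 (volume.restrict (Ioi 0)) gn g)
    (hgn0 : ∀ n, ∀ᵐ x ∂(volume.restrict (Ioi (0:ℝ))), 0 ≤ gn n x)
    (hgnm : ∀ n, Measurable (gn n)) (hgn : ∀ n, IntegrableOn (fun x => (1 + x) * |gn n x|) (Ioi 0))
    (hgnL : ∀ n, weightedNorm (gn n) ≤ L) (hgm : Measurable g)
    (hg : IntegrableOn (fun x => (1 + x) * |g x|) (Ioi 0)) {R : ℝ} {kn : ℕ → ℝ → ℝ → ℝ}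
    {k : ℝ → ℝ → ℝ} (hknm : ∀ n, Measurable (Function.uncurry (kn n)))
    (hkm : Measurable (Function.uncurry k)) {c : ℝ → ℝ} (hc0 : ∀ A ≥ 0, 0 ≤ c A)
    (hc : Tendsto c atTop (𝓝 0))
    (hknc : ∀ n, ∀ A ≥ 0, ∀ x ∈ Ioo 0 R, ∀ y > 0, A ≤ y → |kn n x y| ≤ c A * (1 + y))
    (hkc : ∀ A ≥ 0, ∀ x ∈ Ioo 0 R, ∀ y > 0, A ≤ y → |k x y| ≤ c A * (1 + y))
    (hkn : ∀ A, ∀ᶠ n in atTop, ∀ x ∈ Ioo 0 R, ∀ y ∈ Ioo 0 A, kn n x y = k x y) :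
    Tendsto (fun n => ∫ x in Ioo 0 R, gn n x * ∫ y in Ioi 0, kn n x y * gn n y) atTop
      (𝓝 (∫ x in Ioo 0 R, g x * ∫ y in Ioi 0, k x y * g y)) := by
  refine tendsto_of_forall_eventually_dist_le (p := atTop)
    (b := fun A n => ∫ x in Ioo 0 R, gn n x * ∫ y in Ioo 0 A, k x y * gn n y)
    (c := fun A => ∫ x in Ioo 0 R, g x * ∫ y in Ioo 0 A, k x y * g y)
    (e := fun A => c A * L * L) (e' := fun A => c A * weightedNorm g * weightedNorm g)
    ?_ ?_ ?_ (by simpa using (hc.mul_const L).mul_const L)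
    (by simpa using (hc.mul_const (weightedNorm g)).mul_const (weightedNorm g))
  · filter_upwards [eventually_ge_atTop 0] with A hA
    exact h.tendsto_setIntegral_Ioo_mul_setIntegral_Ioo hgn0 hgnm hgn hgnL hgm hg hkm
      (C := c 0 * (1 + A)) (mul_nonneg (hc0 0 le_rfl) (by linarith)) fun x hx y hy =>
        (hkc 0 le_rfl x hx y hy.1 hy.1.le).trans
          (mul_le_mul_of_nonneg_left (by linarith [hy.2]) (hc0 0 le_rfl))
  · filter_upwards [eventually_ge_atTop 0] with A hA
    filter_upwards [hkn A] with n hn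
    have hcut : ∫ x in Ioo 0 R, gn n x * ∫ y in Ioo 0 A, k x y * gn n y =
        ∫ x in Ioo 0 R, gn n x * ∫ y in Ioo 0 A, kn n x y * gn n y :=
      setIntegral_congr_fun measurableSet_Ioo fun x hx => congrArg (gn n x * ·)
        (setIntegral_congr_fun measurableSet_Ioo fun y hy => by rw [hn x hx y hy])
    rw [Real.dist_eq, hcut]
    exact abs_setIntegral_mul_setIntegral_sub_le measurableSet_Ioo Ioo_subset_Ioi_self (hknm n)
      (hgnm n) (hgn n) (hgnL n) (hc0 0 le_rfl) (hc0 A hA)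
      (fun x hx y hy => hknc n 0 le_rfl x hx y hy hy.le) (hknc n A hA)
  · filter_upwards [eventually_ge_atTop 0] with A hA
    rw [Real.dist_eq, abs_sub_comm]
    exact abs_setIntegral_mul_setIntegral_sub_le measurableSet_Ioo Ioo_subset_Ioi_self hkm hgm hg
      le_rfl (hc0 0 le_rfl) (hc0 A hA) (fun x hx y hy => hkc 0 le_rfl x hx y hy hy.le) (hkc A hA)

end Weighted

section Coagulation

variable {K : ℝ → ℝ → ℝ}

theorem kernel_tail_le {φ : ℝ → ℝ} {k₁ μ : ℝ} (hμ1 : μ ≤ 1)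
    (hφnn : ∀ x > (0:ℝ), 0 ≤ φ x) (hKbound : ∀ x > (0:ℝ), ∀ y > (0:ℝ), K x y ≤ φ x * φ y)
    (hφ : ∀ x > (0:ℝ), φ x ≤ k₁ * (1 + x) ^ μ) {x y R A : ℝ} (hx : 0 < x) (hxR : x ≤ R)
    (hA : 0 ≤ A) (hAy : A ≤ y) (hy : 0 < y) :
    K x y ≤ k₁ ^ 2 * (1 + R) * (1 + A) ^ (μ - 1) * (1 + y) := by
  have hx' : (1 + x) ^ μ ≤ 1 + R :=
    calc (1 + x) ^ μ ≤ (1 + x) ^ (1:ℝ) := Real.rpow_le_rpow_of_exponent_le (by linarith) hμ1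
      _ ≤ 1 + R := by rw [Real.rpow_one]; linarith
  have hy' : (1 + y) ^ μ ≤ (1 + A) ^ (μ - 1) * (1 + y) :=
    calc (1 + y) ^ μ = (1 + y) ^ (μ - 1) * (1 + y) := by
          rw [Real.rpow_sub_one (by linarith), div_mul_cancel₀ _ (by linarith)]
      _ ≤ (1 + A) ^ (μ - 1) * (1 + y) := mul_le_mul_of_nonneg_right
          (Real.rpow_le_rpow_of_nonpos (by linarith) (by linarith) (by linarith)) (by linarith)
  calc K x y ≤ φ x * φ y := hKbound x hx y hy
    _ ≤ (k₁ * (1 + x) ^ μ) * (k₁ * (1 + y) ^ μ) :=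
        mul_le_mul (hφ x hx) (hφ y hy) (hφnn y hy) ((hφnn x hx).trans (hφ x hx))
    _ = k₁ ^ 2 * ((1 + x) ^ μ * (1 + y) ^ μ) := by ring
    _ ≤ k₁ ^ 2 * ((1 + R) * ((1 + A) ^ (μ - 1) * (1 + y))) :=
        mul_le_mul_of_nonneg_left (mul_le_mul hx' hy' (by positivity) (by linarith)) (sq_nonneg _)
    _ = k₁ ^ 2 * (1 + R) * (1 + A) ^ (μ - 1) * (1 + y) := by ring

theorem Ktr_of_lt {n : ℕ} {x y : ℝ} (h : x + y < n) : Ktr K n x y = K x y := if_pos h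

theorem abs_Ktr_le (hK : ∀ x y, 0 ≤ K x y) (n : ℕ) (x y : ℝ) : |Ktr K n x y| ≤ K x y := by
  unfold Ktr
  split_ifs
  · exact (abs_of_nonneg (hK x y)).le
  · simpa using hK x y

theorem measurable_uncurry_Ktr (hK : Measurable (Function.uncurry K)) (n : ℕ) :
    Measurable (Function.uncurry (Ktr K n)) :=
  Measurable.ite (measurableSet_lt (measurable_fst.add measurable_snd) measurable_const) hK
    measurable_const

theorem setIntegral_Ioo_mul_Ktr_eq_Ioi (n : ℕ) (x a : ℝ) (F : ℝ → ℝ) :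
    ∫ y in Ioo 0 (n - x), a * Ktr K n x y * F y = ∫ y in Ioi 0, a * Ktr K n x y * F y :=
  (setIntegral_eq_of_subset_of_forall_sdiff_eq_zero measurableSet_Ioi Ioo_subset_Ioi_self
    fun y hy => by
      have hxy : ¬ x + y < n := fun h => hy.2 ⟨hy.1, by linarith⟩
      simp [Ktr, hxy]).symm

end Coagulation

theorem coagulation_loss_weak_convergence_general
    (K : ℝ → ℝ → ℝ) (φ : ℝ → ℝ) (k₁ μ L : ℝ) (gn : ℕ → ℝ → ℝ) (g : ℝ → ℝ)
    -- (H1)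
    (hKmeas : Measurable (Function.uncurry K))
    (hKnn : ∀ x y, 0 ≤ K x y)
    -- (H2)
    (hμ1 : μ < 1)
    (hφnn : ∀ x > (0:ℝ), 0 ≤ φ x)
    (hKbound : ∀ x > (0:ℝ), ∀ y > (0:ℝ), K x y ≤ φ x * φ y)
    (hφ : ∀ x > (0:ℝ), φ x ≤ k₁ * (1 + x) ^ μ)
    -- `(gⁿ)` is a sequence in `X⁺` with `‖gⁿ‖ ≤ L`
    (hgnmeas : ∀ n, Measurable (gn n))
    (hgnnn : ∀ n, ∀ᵐ x ∂(volume.restrict (Ioi (0:ℝ))), 0 ≤ gn n x)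
    (hgnint : ∀ n, IntegrableOn (fun x => (1 + x) * |gn n x|) (Ioi (0:ℝ)))
    (hgnL : ∀ n, (∫ x in Ioi (0:ℝ), (1 + x) * |gn n x|) ≤ L)
    -- `g ∈ X⁺`
    (hgmeas : Measurable g)
    (hgint : IntegrableOn (fun x => (1 + x) * |g x|) (Ioi (0:ℝ)))
    -- `gⁿ ⇀ g` in `L¹(0,∞)`
    (hweak : ∀ ψ : ℝ → ℝ, Measurable ψ → (∃ B, ∀ x, |ψ x| ≤ B) →
      Tendsto (fun n => ∫ x in Ioi (0:ℝ), gn n x * ψ x) atTop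
        (nhds (∫ x in Ioi (0:ℝ), g x * ψ x))) :
    -- `Q₂ⁿ(gⁿ) ⇀ Q₂(g)` in `L¹(0,R)`
    ∀ R > (0:ℝ), ∀ ψ : ℝ → ℝ, Measurable ψ → (∃ B, ∀ x, |ψ x| ≤ B) →
      Tendsto (fun n : ℕ => ∫ x in Ioo (0:ℝ) R,
          (∫ y in Ioo (0:ℝ) ((n:ℝ) - x), Ktr K n x y * gn n x * gn n y) * ψ x)
        atTop
        (nhds (∫ x in Ioo (0:ℝ) R,
          (∫ y in Ioi (0:ℝ), K x y * g x * g y) * ψ x)) := by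
  intro R _ ψ hψm ⟨B, hB⟩
  have hB0 : 0 ≤ B := (abs_nonneg _).trans (hB 0)
  set c : ℝ → ℝ := fun A => B * (k₁ ^ 2 * (1 + R) * (1 + A) ^ (μ - 1))
  have hk (k : ℝ → ℝ → ℝ) (hkK : ∀ x y, |k x y| ≤ K x y) :
      ∀ A ≥ 0, ∀ x ∈ Ioo 0 R, ∀ y > 0, A ≤ y → |ψ x * k x y| ≤ c A * (1 + y) :=
    fun A hA x hx y hy hAy => by
      rw [abs_mul, mul_assoc]
      exact mul_le_mul (hB x) ((hkK x y).trans (kernel_tail_le hμ1.le hφnn hKbound hφ hx.1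
        hx.2.le hA hAy hy)) (abs_nonneg _) hB0
  have hψk (k : ℝ → ℝ → ℝ) (hkm : Measurable (Function.uncurry k)) :
      Measurable (Function.uncurry fun x y => ψ x * k x y) :=
    (hψm.comp measurable_fst).mul hkm
  simp_rw [integral_mul_mul_mul_const, setIntegral_Ioo_mul_Ktr_eq_Ioi]
  refine TendstoWeakL1.tendsto_setIntegral_Ioo_mul_setIntegral_Ioi hweak hgnnn hgnmeas hgnint hgnL
    hgmeas hgint (fun n => hψk _ (measurable_uncurry_Ktr hKmeas n)) (hψk _ hKmeas)
    (fun A hA => mul_nonneg hB0 (mul_nonneg (by positivity) (Real.rpow_nonneg (by linarith) _)))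
    ((tendsto_const_mul_one_add_rpow_atTop (B * k₁ ^ 2 * (1 + R)) hμ1).congr fun A => by ring)
    (fun n => hk _ (abs_Ktr_le hKnn n)) (hk _ fun x y => (abs_of_nonneg (hKnn x y)).le)
    fun A => ?_
  filter_upwards [tendsto_natCast_atTop_atTop.eventually_ge_atTop (R + A)] with n hn x hx y hy
  rw [Ktr_of_lt (by linarith [hx.2, hy.2])]

/-- Lemma 2.3 for `i = 2`: if `(gⁿ)` is bounded in `X⁺` and `gⁿ ⇀ g` in `L¹(0,∞)`,
then the truncated coagulation loss terms converge weakly,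
`Q₂ⁿ(gⁿ) ⇀ Q₂(g)` in `L¹(0,R)` for every `R > 0`, where
`Q₂ⁿ(g)(x) = ∫₀^{n-x} Kₙ(x,y)g(x)g(y)dy` and
`Q₂(g)(x) = ∫₀^∞ K(x,y)g(x)g(y)dy`. -/
theorem coagulation_loss_weak_convergence
    (K : ℝ → ℝ → ℝ) (φ : ℝ → ℝ) (k₁ μ L : ℝ) (gn : ℕ → ℝ → ℝ) (g : ℝ → ℝ)
    -- (H1)
    (hKmeas : Measurable (Function.uncurry K))
    (hKnn : ∀ x y, 0 ≤ K x y)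
    (hKsymm : ∀ x, ∀ y, 0 < x → 0 < y → K x y = K y x)
    -- (H2)
    (hk₁ : 0 < k₁) (hμ0 : 0 ≤ μ) (hμ1 : μ < 1)
    (hφnn : ∀ x > (0:ℝ), 0 ≤ φ x)
    (hKbound : ∀ x > (0:ℝ), ∀ y > (0:ℝ), K x y ≤ φ x * φ y)
    (hφ : ∀ x > (0:ℝ), φ x ≤ k₁ * (1 + x) ^ μ)
    -- `(gⁿ)` is a sequence in `X⁺` with `‖gⁿ‖ ≤ L`
    (hgnmeas : ∀ n, Measurable (gn n))
    (hgnnn : ∀ n, ∀ᵐ x ∂(volume.restrict (Ioi (0:ℝ))), 0 ≤ gn n x)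
    (hgnint : ∀ n, IntegrableOn (fun x => (1 + x) * |gn n x|) (Ioi (0:ℝ)))
    (hgnL : ∀ n, (∫ x in Ioi (0:ℝ), (1 + x) * |gn n x|) ≤ L)
    -- `g ∈ X⁺`
    (hgmeas : Measurable g)
    (hgnn : ∀ᵐ x ∂(volume.restrict (Ioi (0:ℝ))), 0 ≤ g x)
    (hgint : IntegrableOn (fun x => (1 + x) * |g x|) (Ioi (0:ℝ)))
    -- `gⁿ ⇀ g` in `L¹(0,∞)`
    (hweak : ∀ ψ : ℝ → ℝ, Measurable ψ → (∃ B, ∀ x, |ψ x| ≤ B) →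
      Tendsto (fun n => ∫ x in Ioi (0:ℝ), gn n x * ψ x) atTop
        (nhds (∫ x in Ioi (0:ℝ), g x * ψ x))) :
    -- `Q₂ⁿ(gⁿ) ⇀ Q₂(g)` in `L¹(0,R)`
    ∀ R > (0:ℝ), ∀ ψ : ℝ → ℝ, Measurable ψ → (∃ B, ∀ x, |ψ x| ≤ B) →
      Tendsto (fun n : ℕ => ∫ x in Ioo (0:ℝ) R,
          (∫ y in Ioo (0:ℝ) ((n:ℝ) - x), Ktr K n x y * gn n x * gn n y) * ψ x)
        atTop
        (nhds (∫ x in Ioo (0:ℝ) R,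
          (∫ y in Ioi (0:ℝ), K x y * g x * g y) * ψ x)) :=
  coagulation_loss_weak_convergence_general K φ k₁ μ L gn g hKmeas hKnn hμ1 hφnn hKbound hφ hgnmeas
    hgnnn hgnint hgnL hgmeas hgint hweak
end

section
/- Let α ≥ 0, γ > 0, and define Γ(y,x) = (α+2) x^α y^{γ−(α+1)} for 0 < x < y and Γ(y,x) = 0 otherwise. Then for every R > 0, every y ∈ (0,R), and every measurable set E ⊂ (0,R), ∫₀^y 1_E(x) Γ(y,x) dx ≤ C(α,γ) R^{γ²/(γ+1)} |E|^{γ/(γ+1)}, where C(α,γ) = (α+2)(1+α(γ+1))^{−1/(γ+1)}. In particular this Γ satisfies hypothesis (H5) with ω(R,δ) = C(α,γ) R^{γ²/(γ+1)} δ^{γ/(γ+1)}, and ω(R,δ) → 0 as δ → 0. -/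
/-!
On `(0, y)` the kernel is `x ↦ c x^α` with `c = (α+2) y^{γ-(α+1)}`. Hölder's inequality with
exponents `(γ+1)/γ` and `γ+1` bounds `∫ 1_E Γ(y,·)` by `|E|^{γ/(γ+1)}` times the `L^{γ+1}` norm of
the kernel, which is computed exactly: it equals `C(α,γ) y^{γ²/(γ+1)} ≤ C(α,γ) R^{γ²/(γ+1)}`.
-/

open MeasureTheory Set Filter

theorem integral_indicator_one_mul_le_of_holderConjugate {X : Type*} [MeasurableSpace X]
    {μ : Measure X} {p q : ℝ} (hpq : p.HolderConjugate q) {E : Set X} (hE : MeasurableSet E)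
    (hμE : μ E ≠ ⊤) {g : X → ℝ} (hg₀ : 0 ≤ᵐ[μ] g) (hg : MemLp g (ENNReal.ofReal q) μ) :
    ∫ x, E.indicator (fun _ => (1 : ℝ)) x * g x ∂μ
      ≤ μ.real E ^ (1 / p) * (∫ x, g x ^ q ∂μ) ^ (1 / q) := by
  have hpow : (fun x => E.indicator (fun _ => (1 : ℝ)) x ^ p) = E.indicator fun _ => 1 := by
    funext x
    by_cases hx : x ∈ E <;> simp [hx, Real.zero_rpow hpq.ne_zero]
  have h := integral_mul_le_Lp_mul_Lq_of_nonneg hpq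
    (Eventually.of_forall (indicator_nonneg fun _ _ => zero_le_one)) hg₀
    (memLp_indicator_const _ hE 1 (Or.inr hμE)) hg
  rwa [hpow, integral_indicator_const 1 hE, smul_eq_mul, mul_one] at h

theorem integrableOn_Ioo_rpow {a y : ℝ} (ha : -1 < a) :
    IntegrableOn (fun x => x ^ a) (Ioo 0 y) :=
  (intervalIntegral.intervalIntegrable_rpow' ha).1.mono_set Ioo_subset_Ioc_self

theorem integral_Ioo_rpow {a y : ℝ} (ha : -1 < a) (hy : 0 ≤ y) :
    ∫ x in Ioo 0 y, x ^ a = y ^ (a + 1) / (a + 1) := by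
  rw [← integral_Ioc_eq_integral_Ioo, ← intervalIntegral.integral_of_le hy,
    integral_rpow (Or.inl ha), Real.zero_rpow (by linarith), sub_zero]

theorem mul_rpow_rpow {c a q x : ℝ} (hc : 0 ≤ c) (hx : 0 ≤ x) :
    (c * x ^ a) ^ q = c ^ q * x ^ (a * q) := by
  rw [Real.mul_rpow hc (Real.rpow_nonneg hx a), ← Real.rpow_mul hx]

theorem memLp_Ioo_const_mul_rpow {c a q y : ℝ} (hc : 0 ≤ c) (hq : 0 < q) (ha : -1 < a * q) :
    MemLp (fun x => c * x ^ a) (ENNReal.ofReal q) (volume.restrict (Ioo 0 y)) := by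
  refine (integrable_norm_rpow_iff (by fun_prop) (by simpa using hq) ENNReal.ofReal_ne_top).1 ?_
  rw [ENNReal.toReal_ofReal hq.le]
  refine IntegrableOn.congr_fun ((integrableOn_Ioo_rpow ha).const_mul (c ^ q))
    (fun x hx => ?_) measurableSet_Ioo
  have hx₀ : 0 ≤ x := hx.1.le
  rw [Real.norm_of_nonneg (by positivity), mul_rpow_rpow hc hx₀]

theorem integral_Ioo_const_mul_rpow_rpow_one_div {c a q y : ℝ} (hc : 0 ≤ c) (hq : 0 < q)
    (ha : -1 < a * q) (hy : 0 ≤ y) :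
    (∫ x in Ioo 0 y, (c * x ^ a) ^ q) ^ (1 / q)
      = c * (1 + a * q) ^ (-1 / q) * y ^ ((1 + a * q) / q) := by
  have h1aq : 0 < 1 + a * q := by linarith
  rw [setIntegral_congr_fun measurableSet_Ioo fun x hx => mul_rpow_rpow hc hx.1.le,
    integral_const_mul, integral_Ioo_rpow ha hy, add_comm (a * q), div_eq_mul_inv,
    mul_comm (y ^ _), ← mul_assoc, Real.mul_rpow (by positivity) (by positivity),
    Real.mul_rpow (by positivity) (by positivity), ← Real.rpow_mul hc,
    mul_one_div_cancel hq.ne', Real.rpow_one, ← Real.rpow_neg_one, ← Real.rpow_mul h1aq.le,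
    ← Real.rpow_mul hy, mul_one_div, mul_one_div]

theorem setIntegral_Ioo_indicator_one_mul_const_mul_rpow_le {p q c a y : ℝ}
    (hpq : p.HolderConjugate q) (hc : 0 ≤ c) (ha : -1 < a * q) (hy : 0 ≤ y) {E : Set ℝ}
    (hE : MeasurableSet E) :
    ∫ x in Ioo 0 y, E.indicator (fun _ => (1 : ℝ)) x * (c * x ^ a)
      ≤ volume.real (E ∩ Ioo 0 y) ^ (1 / p)
          * (c * (1 + a * q) ^ (-1 / q) * y ^ ((1 + a * q) / q)) := by
  have hg₀ : 0 ≤ᵐ[volume.restrict (Ioo 0 y)] fun x => c * x ^ a := by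
    filter_upwards [ae_restrict_mem measurableSet_Ioo] with x hx
    have := hx.1
    positivity
  have hE_fin : volume.restrict (Ioo 0 y) E ≠ ⊤ := by
    rw [Measure.restrict_apply hE]
    exact ((measure_mono inter_subset_right).trans_lt measure_Ioo_lt_top).ne
  have h := integral_indicator_one_mul_le_of_holderConjugate hpq hE hE_fin hg₀
    (memLp_Ioo_const_mul_rpow hc hpq.symm.pos ha)
  rwa [integral_Ioo_const_mul_rpow_rpow_one_div hc hpq.symm.pos ha hy,
    measureReal_restrict_apply hE] at h

theorem tendsto_const_mul_rpow_nhdsGT_zero {c e : ℝ} (he : 0 < e) :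
    Tendsto (fun δ : ℝ => c * δ ^ e) (nhdsWithin 0 (Ioi 0)) (nhds 0) := by
  have h := ((Real.continuousAt_rpow_const 0 e (Or.inr he.le)).tendsto.const_mul c).mono_left
    (nhdsWithin_le_nhds (s := Ioi 0))
  rwa [Real.zero_rpow he.ne', mul_zero] at h

theorem power_law_kernel_satisfies_H5_general
    (α γ : ℝ) (hα : 0 ≤ α) (hγ : 0 < γ)
    (Γ : ℝ → ℝ → ℝ)
    (hΓ : ∀ y x, 0 < x → x < y → Γ y x = (α + 2) * x ^ α * y ^ (γ - (α + 1))) :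
    (∀ R > (0:ℝ), ∀ y ∈ Ioo (0:ℝ) R, ∀ E ⊆ Ioo (0:ℝ) R, MeasurableSet E →
      (∫ x in Ioo (0:ℝ) y, E.indicator (fun _ => (1:ℝ)) x * Γ y x)
        ≤ ((α + 2) * (1 + α * (γ + 1)) ^ (-(1:ℝ) / (γ + 1))) * R ^ (γ ^ 2 / (γ + 1))
            * (volume E).toReal ^ (γ / (γ + 1))) ∧
    (∀ R > (0:ℝ),
      Tendsto (fun δ : ℝ =>
          ((α + 2) * (1 + α * (γ + 1)) ^ (-(1:ℝ) / (γ + 1))) * R ^ (γ ^ 2 / (γ + 1))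
            * δ ^ (γ / (γ + 1)))
        (nhdsWithin 0 (Ioi 0)) (nhds 0)) := by
  refine ⟨fun R _ y ⟨hy, hyR⟩ E hER hE => ?_,
    fun R _ => tendsto_const_mul_rpow_nhdsGT_zero (by positivity)⟩
  have hpq : ((γ + 1) / γ).HolderConjugate (γ + 1) := by
    simpa using Real.holderConjugate_one_div (a := γ / (γ + 1)) (b := 1 / (γ + 1))
      (by positivity) (by positivity) (by field_simp)
  have hαq : -1 < α * (γ + 1) := by nlinarith
  have hEy : volume.real (E ∩ Ioo 0 y) ≤ volume.real E :=
    measureReal_mono inter_subset_left ((measure_mono hER).trans_lt measure_Ioo_lt_top).ne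
  have hy_exp : y ^ (γ - (α + 1)) * y ^ ((1 + α * (γ + 1)) / (γ + 1)) = y ^ (γ ^ 2 / (γ + 1)) := by
    rw [← Real.rpow_add hy]; congr 1; field_simp; ring
  calc ∫ x in Ioo 0 y, E.indicator (fun _ => (1:ℝ)) x * Γ y x
      = ∫ x in Ioo 0 y, E.indicator (fun _ => (1:ℝ)) x * ((α + 2) * y ^ (γ - (α + 1)) * x ^ α) :=
        setIntegral_congr_fun measurableSet_Ioo fun x hx => by rw [hΓ y x hx.1 hx.2]; ring
    _ ≤ volume.real (E ∩ Ioo 0 y) ^ (γ / (γ + 1))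
          * ((α + 2) * (1 + α * (γ + 1)) ^ (-(1:ℝ) / (γ + 1)) * y ^ (γ ^ 2 / (γ + 1))) := by
        convert setIntegral_Ioo_indicator_one_mul_const_mul_rpow_le
          (c := (α + 2) * y ^ (γ - (α + 1))) hpq (by positivity) hαq hy.le hE using 2
        · rw [one_div_div]
        · rw [← hy_exp]; ring
    _ ≤ _ := by
        rw [mul_comm, ← measureReal_def]
        gcongr

/-- The power-law fragmentation kernel `Γ(y,x) = (α+2) x^α y^{γ-(α+1)}`, `0 < x < y`,
satisfies the Hölder estimate
`∫₀^y 1_E(x) Γ(y,x) dx ≤ C(α,γ) R^{γ²/(γ+1)} |E|^{γ/(γ+1)}`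
for `y ∈ (0,R)` and measurable `E ⊆ (0,R)`, with
`C(α,γ) = (α+2)(1+α(γ+1))^{-1/(γ+1)}`; in particular it satisfies (H5) with
`ω(R,δ) = C(α,γ) R^{γ²/(γ+1)} δ^{γ/(γ+1)} → 0` as `δ → 0`. -/
theorem power_law_kernel_satisfies_H5
    (α γ : ℝ) (hα : 0 ≤ α) (hγ : 0 < γ)
    (Γ : ℝ → ℝ → ℝ)
    (hΓ : ∀ y x, 0 < x → x < y → Γ y x = (α + 2) * x ^ α * y ^ (γ - (α + 1)))
    (hΓzero : ∀ y x, ¬(0 < x ∧ x < y) → Γ y x = 0) :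
    (∀ R > (0:ℝ), ∀ y ∈ Ioo (0:ℝ) R, ∀ E ⊆ Ioo (0:ℝ) R, MeasurableSet E →
      (∫ x in Ioo (0:ℝ) y, E.indicator (fun _ => (1:ℝ)) x * Γ y x)
        ≤ ((α + 2) * (1 + α * (γ + 1)) ^ (-(1:ℝ) / (γ + 1))) * R ^ (γ ^ 2 / (γ + 1))
            * (volume E).toReal ^ (γ / (γ + 1))) ∧
    (∀ R > (0:ℝ),
      Tendsto (fun δ : ℝ =>
          ((α + 2) * (1 + α * (γ + 1)) ^ (-(1:ℝ) / (γ + 1))) * R ^ (γ ^ 2 / (γ + 1))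
            * δ ^ (γ / (γ + 1)))
        (nhdsWithin 0 (Ioi 0)) (nhds 0)) :=
  power_law_kernel_satisfies_H5_general α γ hα hγ Γ hΓ
end
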